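/- Suppose $1 \leq m \leq n$ are integers, $A \subseteq \mathbb{R}^n$, $a \in \mathbb{R}^n$ and $T$ is an $m$-dimensional linear subspace of $\mathbb{R}^n$. Then the following three conditions are equivalent: (1) $\mathrm{Tan}^{*m}(\mathcal{H}^m \llcorner A, a) \subseteq T$; (2) for every $\epsilon > 0$, $\Theta^m(\mathcal{H}^m \llcorner (A \setminus \mathbf{X}(a,T,\epsilon)), a) = 0$, where $\mathbf{X}(a,T,\epsilon) = \{z : |T^\perp_\natural(z-a)| \leq \epsilon |T_\natural(z-a)|\}$; (3) for every $\epsilon > 0$, $\lim_{r\to 0} \frac{\mathcal{H}^m(A \cap \mathbf{B}(a,r) \cap \{z : |T^\perp_\natural(z-a)| > \epsilon r\})}{\alpha(m) r^m} = 0$. -/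

import Mathlib

open MeasureTheory Metric Filter Set
open scoped ENNReal Topology

/-- Volume of the unit ball in `ℝ^m`, i.e. `α(m)`. -/
noncomputable def ballVol (m : ℕ) : ℝ≥0∞ :=
  volume (Metric.closedBall (0 : EuclideanSpace ℝ (Fin m)) 1)

variable {X : Type*} [NormedAddCommGroup X] [NormedSpace ℝ X] [MeasurableSpace X]

/-- The cone `𝐄(a,v,ε) = {x : |r(x-a) - v| < ε for some r > 0}`. -/
def ECone (a v : X) (ε : ℝ) : Set X :=
  {x | ∃ r : ℝ, 0 < r ∧ ‖r • (x - a) - v‖ < ε}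

/-- Upper `m`-dimensional density `Θ^{*m}(φ, a)`. -/
noncomputable def upperDensity (m : ℕ) (φ : Measure X) (a : X) : ℝ≥0∞ :=
  Filter.limsup (fun r : ℝ =>
    φ (Metric.closedBall a r) / (ballVol m * ENNReal.ofReal (r ^ m))) (𝓝[>] (0 : ℝ))

/-- Lower `m`-dimensional density `Θ^m_*(φ, a)`. -/
noncomputable def lowerDensity (m : ℕ) (φ : Measure X) (a : X) : ℝ≥0∞ :=
  Filter.liminf (fun r : ℝ =>
    φ (Metric.closedBall a r) / (ballVol m * ENNReal.ofReal (r ^ m))) (𝓝[>] (0 : ℝ))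

/-- The `m`-dimensional approximate upper tangent cone `Tan^{*m}(φ, a)`. -/
def TanUpper (m : ℕ) (φ : Measure X) (a : X) : Set X :=
  {v | ∀ ε : ℝ, 0 < ε → 0 < upperDensity m (φ.restrict (ECone a v ε)) a}

/-- The `m`-dimensional approximate lower tangent cone `Tan^m_*(φ, a)`. -/
def TanLower (m : ℕ) (φ : Measure X) (a : X) : Set X :=
  {v | ∀ ε : ℝ, 0 < ε → ∃ η : ℝ, 0 < η ∧ ∀ r : ℝ, 0 < r → r ≤ η →
    ENNReal.ofReal (η * r ^ m) ≤ φ (Metric.ball (a + r • v) (ε * r))}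

/-- Orthogonal projection onto a subspace, as a map into the ambient space. -/
noncomputable def projS {n : ℕ} (T : Submodule ℝ (EuclideanSpace ℝ (Fin n)))
    (x : EuclideanSpace ℝ (Fin n)) : EuclideanSpace ℝ (Fin n) :=
  (Submodule.orthogonalProjection T x : EuclideanSpace ℝ (Fin n))

/-!
Inside `𝐁(a,r)`, points farther than `εr` from `a + T` lie outside `𝐗(a,T,ε)`, so (2) ⇒ (3) is an
inclusion of sets. Conversely, outside `𝐗(a,T,ε)` the normal component of `z - a` is at least
`ε/(1+ε) |z - a|`, so cutting the ball into dyadic annuli bounds the quantity in (2) at radius `r`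
by the quantities in (3) at radii `r/2^k`; by the `r^m` scaling (with `m ≥ 1`) these are dominated
by a geometric series. For (2) ⇒ (1), a direction `v ∉ T` has a thin cone `𝐄(a,v,δ)` that misses
some `𝐗(a,T,ε)`. For (1) ⇒ (2), the unit directions outside the interior of `𝐗(a,T,ε)` form a
compact set avoiding `T`, hence avoiding `Tan^{*m}`, so finitely many cones `𝐄(a,v,δ)` of zero
density cover `A \ 𝐗(a,T,ε)`.
-/

def HasZeroDensity (m : ℕ) (f : ℝ → ℝ≥0∞) : Prop :=
  Tendsto (fun r : ℝ => f r / (ballVol m * ENNReal.ofReal (r ^ m))) (𝓝[>] 0) (𝓝 0)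

/-- The paper's `𝐗(a,T,ε)`. -/
def xCone {n : ℕ} (a : EuclideanSpace ℝ (Fin n)) (T : Submodule ℝ (EuclideanSpace ℝ (Fin n)))
    (ε : ℝ) : Set (EuclideanSpace ℝ (Fin n)) :=
  {z | ‖projS Tᗮ (z - a)‖ ≤ ε * ‖projS T (z - a)‖}

lemma ballVol_mul_ofReal_pow_ne_zero (m : ℕ) {r : ℝ} (hr : 0 < r) :
    ballVol m * ENNReal.ofReal (r ^ m) ≠ 0 :=
  mul_ne_zero (measure_closedBall_pos volume _ one_pos).ne'
    (ENNReal.ofReal_pos.2 (pow_pos hr m)).ne'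

lemma ballVol_mul_ofReal_pow_ne_top (m : ℕ) (r : ℝ) : ballVol m * ENNReal.ofReal (r ^ m) ≠ ⊤ :=
  ENNReal.mul_ne_top measure_closedBall_lt_top.ne ENNReal.ofReal_ne_top

lemma ofReal_div_two_pow_pow_le {m : ℕ} (hm : 1 ≤ m) {r : ℝ} (hr : 0 ≤ r) (k : ℕ) :
    ENNReal.ofReal ((r / 2 ^ k) ^ m) ≤ 2⁻¹ ^ k * ENNReal.ofReal (r ^ m) := by
  have h : (r / 2 ^ k) ^ m ≤ (2⁻¹ : ℝ) ^ k * r ^ m :=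
    calc (r / 2 ^ k) ^ m = ((2 : ℝ) ^ k)⁻¹ ^ m * r ^ m := by ring
      _ ≤ ((2 : ℝ) ^ k)⁻¹ * r ^ m := by
          gcongr
          exact pow_le_of_le_one (by positivity)
            (inv_le_one_of_one_le₀ (one_le_pow₀ one_le_two)) (by omega)
      _ = (2⁻¹ : ℝ) ^ k * r ^ m := by rw [inv_pow]
  calc ENNReal.ofReal ((r / 2 ^ k) ^ m) ≤ ENNReal.ofReal ((2⁻¹ : ℝ) ^ k * r ^ m) :=
        ENNReal.ofReal_le_ofReal h
    _ = 2⁻¹ ^ k * ENNReal.ofReal (r ^ m) := by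
        rw [ENNReal.ofReal_mul (by positivity), ENNReal.ofReal_pow (by norm_num),
          ENNReal.ofReal_inv_of_pos two_pos, ENNReal.ofReal_ofNat]

lemma exists_dyadic_scale {t r : ℝ} (ht : 0 < t) (htr : t ≤ r) :
    ∃ k : ℕ, t ≤ r / 2 ^ k ∧ r / 2 ^ k < 2 * t := by
  obtain ⟨k, hle, hlt⟩ := exists_nat_pow_near ((one_le_div ht).2 htr) one_lt_two
  refine ⟨k, (le_div_iff₀ (by positivity)).2 ?_, (div_lt_iff₀ (by positivity)).2 ?_⟩
  · rw [mul_comm]; exact (le_div_iff₀ ht).1 hle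
  · rw [pow_succ] at hlt; linarith [(div_lt_iff₀ ht).1 hlt]

namespace HasZeroDensity

variable {m : ℕ} {f g : ℝ → ℝ≥0∞}

lemma mono (hg : HasZeroDensity m g) (hfg : f ≤ᶠ[𝓝[>] 0] g) : HasZeroDensity m f :=
  tendsto_of_tendsto_of_tendsto_of_le_of_le' tendsto_const_nhds hg
    (Eventually.of_forall fun _ => zero_le) (hfg.mono fun _ h => ENNReal.div_le_div_right h _)

lemma finset_sum {ι : Type*} {t : Finset ι} {f : ι → ℝ → ℝ≥0∞}
    (h : ∀ i ∈ t, HasZeroDensity m (f i)) : HasZeroDensity m fun r => ∑ i ∈ t, f i r := by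
  simpa only [HasZeroDensity, div_eq_mul_inv, Finset.sum_mul, Finset.sum_const_zero]
    using tendsto_finsetSum t h

lemma tsum_dyadic (hm : 1 ≤ m) (hf : HasZeroDensity m f) :
    HasZeroDensity m fun r => ∑' k : ℕ, f (r / 2 ^ k) := by
  rw [HasZeroDensity, ENNReal.tendsto_nhds_zero] at hf ⊢
  intro η hη
  obtain ⟨ρ, hρ, hsmall⟩ := mem_nhdsGT_iff_exists_Ioo_subset.1
    (hf (η / 2) (ENNReal.half_pos hη.ne'))
  filter_upwards [Ioo_mem_nhdsGT hρ] with r ⟨hr, hrρ⟩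
  have hscale (k : ℕ) : f (r / 2 ^ k) ≤ η / 2 * ballVol m * ENNReal.ofReal (r ^ m) * 2⁻¹ ^ k := by
    have hk : r / 2 ^ k ∈ Ioo 0 ρ :=
      ⟨by positivity, (div_le_self hr.le (one_le_pow₀ (one_le_two : (1 : ℝ) ≤ 2))).trans_lt hrρ⟩
    calc f (r / 2 ^ k) ≤ η / 2 * (ballVol m * ENNReal.ofReal ((r / 2 ^ k) ^ m)) :=
          (ENNReal.div_le_iff (ballVol_mul_ofReal_pow_ne_zero m hk.1)
            (ballVol_mul_ofReal_pow_ne_top m _)).1 (hsmall hk)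
      _ ≤ η / 2 * (ballVol m * (2⁻¹ ^ k * ENNReal.ofReal (r ^ m))) := by
          gcongr; exact ofReal_div_two_pow_pow_le hm hr.le k
      _ = η / 2 * ballVol m * ENNReal.ofReal (r ^ m) * 2⁻¹ ^ k := by ring
  rw [ENNReal.div_le_iff (ballVol_mul_ofReal_pow_ne_zero m hr)
    (ballVol_mul_ofReal_pow_ne_top m r)]
  calc ∑' k : ℕ, f (r / 2 ^ k)
      ≤ ∑' k : ℕ, η / 2 * ballVol m * ENNReal.ofReal (r ^ m) * 2⁻¹ ^ k :=
        ENNReal.tsum_le_tsum hscale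
    _ = η / 2 * 2 * (ballVol m * ENNReal.ofReal (r ^ m)) := by
        rw [ENNReal.tsum_mul_left, ENNReal.tsum_geometric_two]; ring
    _ = η * (ballVol m * ENNReal.ofReal (r ^ m)) := by
        rw [ENNReal.div_mul_cancel two_ne_zero ENNReal.ofNat_ne_top]

end HasZeroDensity

omit [NormedSpace ℝ X] in
lemma upperDensity_eq_zero_iff {m : ℕ} {φ : Measure X} {a : X} :
    upperDensity m φ a = 0 ↔ HasZeroDensity m fun r => φ (closedBall a r) := by
  refine ⟨fun h => ?_, fun h => h.limsup_eq⟩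
  refine tendsto_order.2 ⟨fun b hb => absurd hb not_lt_zero, fun b hb => ?_⟩
  exact eventually_lt_of_limsup_lt (h ▸ hb : upperDensity m φ a < b)

omit [MeasurableSpace X] in
lemma mem_eCone_iff {a v x : X} {δ : ℝ} :
    x ∈ ECone a v δ ↔ ∃ s : ℝ, 0 < s ∧ s • (x - a) ∈ ball v δ := by
  simp only [mem_ball, dist_eq_norm]; rfl

omit [MeasurableSpace X] in
lemma isOpen_eCone (a v : X) (δ : ℝ) : IsOpen (ECone a v δ) := by
  have h : ECone a v δ = ⋃ s > (0 : ℝ), (fun x => s • (x - a)) ⁻¹' ball v δ := by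
    ext; simp [mem_eCone_iff]
  rw [h]
  exact isOpen_biUnion fun s _ => isOpen_ball.preimage (by fun_prop)

lemma hasZeroDensity_cone_of_isCompact_of_disjoint_tanUpper {m : ℕ} {φ : Measure X} {a : X}
    {K : Set X} (hK : IsCompact K) (hKTan : Disjoint K (TanUpper m φ a)) :
    HasZeroDensity m fun r => φ ({z | ∃ s : ℝ, 0 < s ∧ s • (z - a) ∈ K} ∩ closedBall a r) := by
  have hlocal : ∀ v ∈ K, ∃ δ > 0,
      HasZeroDensity m fun r => φ.restrict (ECone a v δ) (closedBall a r) := by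
    intro v hv
    have hvTan := hKTan.notMem_of_mem_left hv
    simp only [TanUpper, mem_ofPred_eq, not_forall, not_lt, nonpos_iff_eq_zero] at hvTan
    obtain ⟨δ, hδ, hzero⟩ := hvTan
    exact ⟨δ, hδ, upperDensity_eq_zero_iff.1 hzero⟩
  choose! δ hδ hzero using hlocal
  obtain ⟨t, htK, hcover⟩ :=
    hK.elim_nhds_subcover (fun v => ball v (δ v)) fun v hv => ball_mem_nhds v (hδ v hv)
  refine (HasZeroDensity.finset_sum fun v hv => hzero v (htK v hv)).mono
    (Eventually.of_forall fun r => ?_)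
  have hsub : {z | ∃ s : ℝ, 0 < s ∧ s • (z - a) ∈ K} ∩ closedBall a r ⊆
      ⋃ v ∈ t, closedBall a r ∩ ECone a v (δ v) := by
    rintro z ⟨⟨s, hs, hzK⟩, hzB⟩
    obtain ⟨v, hvt, hzv⟩ := mem_iUnion₂.1 (hcover hzK)
    exact mem_biUnion hvt ⟨hzB, mem_eCone_iff.2 ⟨s, hs, hzv⟩⟩
  calc φ ({z | ∃ s : ℝ, 0 < s ∧ s • (z - a) ∈ K} ∩ closedBall a r)
      ≤ ∑ v ∈ t, φ (closedBall a r ∩ ECone a v (δ v)) :=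
        (measure_mono hsub).trans (measure_biUnion_finset_le t _)
    _ ≤ ∑ v ∈ t, φ.restrict (ECone a v (δ v)) (closedBall a r) :=
        Finset.sum_le_sum fun v _ => Measure.le_restrict_apply _ _

section Projection

variable {n : ℕ} (T : Submodule ℝ (EuclideanSpace ℝ (Fin n)))

lemma norm_projS_le (x : EuclideanSpace ℝ (Fin n)) : ‖projS T x‖ ≤ ‖x‖ :=
  T.norm_starProjection_apply_le x

lemma norm_projS_smul (c : ℝ) (x : EuclideanSpace ℝ (Fin n)) :
    ‖projS T (c • x)‖ = |c| * ‖projS T x‖ := by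
  rw [projS, map_smul, Submodule.coe_smul, norm_smul, Real.norm_eq_abs]; rfl

lemma norm_le_norm_projS_add_norm_projS_orthogonal (x : EuclideanSpace ℝ (Fin n)) :
    ‖x‖ ≤ ‖projS T x‖ + ‖projS Tᗮ x‖ := by
  conv_lhs => rw [← T.starProjection_add_starProjection_orthogonal x]
  exact norm_add_le _ _

lemma projS_orthogonal_eq_zero_iff {x : EuclideanSpace ℝ (Fin n)} : projS Tᗮ x = 0 ↔ x ∈ T := by
  have h := Tᗮ.starProjection_apply_eq_zero_iff (v := x)
  rw [T.orthogonal_orthogonal] at h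
  exact h

lemma continuous_projS : Continuous (projS T) :=
  (T.starProjection).continuous

end Projection

section XCone

variable {n : ℕ} {a z : EuclideanSpace ℝ (Fin n)} {T : Submodule ℝ (EuclideanSpace ℝ (Fin n))}
  {ε : ℝ}

lemma self_mem_xCone : a ∈ xCone a T ε := by
  simp [xCone, projS]

lemma mul_norm_lt_of_notMem_xCone (hε : 0 ≤ ε) (hz : z ∉ xCone a T ε) :
    ε * ‖z - a‖ < (1 + ε) * ‖projS Tᗮ (z - a)‖ := by
  have htri := norm_le_norm_projS_add_norm_projS_orthogonal T (z - a)
  have hnormal : ε * ‖projS T (z - a)‖ < ‖projS Tᗮ (z - a)‖ := not_le.1 hz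
  nlinarith

lemma inter_closedBall_inter_normal_gt_subset (hε : 0 ≤ ε) (A : Set (EuclideanSpace ℝ (Fin n)))
    (r : ℝ) : A ∩ closedBall a r ∩ {z | ε * r < ‖projS Tᗮ (z - a)‖} ⊆
      (A \ xCone a T ε) ∩ closedBall a r := by
  rintro z ⟨⟨hzA, hzB⟩, hzfar⟩
  refine ⟨⟨hzA, fun hzX => ?_⟩, hzB⟩
  have hproj : ‖projS T (z - a)‖ ≤ r :=
    (norm_projS_le T _).trans (by rwa [mem_closedBall, dist_eq_norm] at hzB)
  have : ε * ‖projS T (z - a)‖ ≤ ε * r := mul_le_mul_of_nonneg_left hproj hε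
  exact ((hzfar.trans_le hzX).trans_le this).false

lemma diff_xCone_inter_closedBall_subset_iUnion (hε : 0 < ε) (A : Set (EuclideanSpace ℝ (Fin n)))
    (r : ℝ) : (A \ xCone a T ε) ∩ closedBall a r ⊆
      ⋃ k : ℕ, A ∩ closedBall a (r / 2 ^ k) ∩
        {z | ε / (2 * (1 + ε)) * (r / 2 ^ k) < ‖projS Tᗮ (z - a)‖} := by
  rintro z ⟨⟨hzA, hzX⟩, hzB⟩
  have hza : 0 < ‖z - a‖ :=
    norm_pos_iff.2 (sub_ne_zero.2 fun h => hzX (h ▸ self_mem_xCone))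
  rw [mem_closedBall, dist_eq_norm] at hzB
  obtain ⟨k, hle, hlt⟩ := exists_dyadic_scale hza hzB
  refine mem_iUnion.2 ⟨k, ⟨hzA, by rwa [mem_closedBall, dist_eq_norm]⟩, ?_⟩
  have hfar := mul_norm_lt_of_notMem_xCone hε.le hzX
  calc ε / (2 * (1 + ε)) * (r / 2 ^ k) ≤ ε / (2 * (1 + ε)) * (2 * ‖z - a‖) := by gcongr
    _ = ε * ‖z - a‖ / (1 + ε) := by field_simp
    _ < ‖projS Tᗮ (z - a)‖ := (div_lt_iff₀' (by positivity)).2 hfar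

lemma exists_eCone_subset_compl_xCone {v : EuclideanSpace ℝ (Fin n)} (hv : v ∉ T) :
    ∃ ε > 0, ∃ δ > 0, ECone a v δ ⊆ (xCone a T ε)ᶜ := by
  have hc : 0 < ‖projS Tᗮ v‖ := norm_pos_iff.2 fun h => hv ((projS_orthogonal_eq_zero_iff T).1 h)
  set ε := ‖projS Tᗮ v‖ / (‖projS T v‖ + 1)
  have hε : 0 < ε := by positivity
  have hvU : ε * ‖projS T v‖ < ‖projS Tᗮ v‖ := by
    rw [div_mul_eq_mul_div, div_lt_iff₀ (by positivity)]
    nlinarith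
  have hU : IsOpen {w | ε * ‖projS T w‖ < ‖projS Tᗮ w‖} :=
    isOpen_lt (continuous_const.mul (continuous_projS T).norm) (continuous_projS Tᗮ).norm
  obtain ⟨δ, hδ, hball⟩ := Metric.isOpen_iff.1 hU v hvU
  refine ⟨ε, hε, δ, hδ, fun z hz hzX => ?_⟩
  obtain ⟨s, hs, hzs⟩ := mem_eCone_iff.1 hz
  have hfar : ε * ‖projS T (s • (z - a))‖ < ‖projS Tᗮ (s • (z - a))‖ := hball hzs
  rw [norm_projS_smul, norm_projS_smul, abs_of_pos hs, mul_left_comm] at hfar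
  exact (lt_of_mul_lt_mul_left hfar hs.le).not_ge hzX

end XCone

section Equivalences

variable {m n : ℕ} {μ : Measure (EuclideanSpace ℝ (Fin n))} {A : Set (EuclideanSpace ℝ (Fin n))}
  {a : EuclideanSpace ℝ (Fin n)} {T : Submodule ℝ (EuclideanSpace ℝ (Fin n))} {ε : ℝ}

lemma hasZeroDensity_diff_xCone_of_tanUpper_subset
    (hTan : TanUpper m (μ.restrict A) a ⊆ T) (hε : 0 < ε) :
    HasZeroDensity m fun r => μ ((A \ xCone a T ε) ∩ closedBall a r) := by
  set K := {u : EuclideanSpace ℝ (Fin n) | ‖u‖ = 1 ∧ ε * ‖projS T u‖ ≤ ‖projS Tᗮ u‖}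
  have hK : IsCompact K := (isCompact_sphere 0 1).of_isClosed_subset
    ((isClosed_eq continuous_norm continuous_const).inter
      (isClosed_le (continuous_const.mul (continuous_projS T).norm) (continuous_projS Tᗮ).norm))
    fun u hu => mem_sphere_zero_iff_norm.2 hu.1
  have hKT : Disjoint K T := by
    refine disjoint_left.2 fun u ⟨hu1, hu⟩ huT => ?_
    have htri := norm_le_norm_projS_add_norm_projS_orthogonal T u
    rw [(projS_orthogonal_eq_zero_iff T).2 huT, norm_zero] at hu htri
    nlinarith
  have hdiff : A \ xCone a T ε ⊆ {z | ∃ s : ℝ, 0 < s ∧ s • (z - a) ∈ K} ∩ A := by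
    rintro z ⟨hzA, hzX⟩
    have hza : z - a ≠ 0 := sub_ne_zero.2 fun h => hzX (h ▸ self_mem_xCone)
    refine ⟨⟨‖z - a‖⁻¹, inv_pos.2 (norm_pos_iff.2 hza), norm_smul_inv_norm hza, ?_⟩, hzA⟩
    rw [norm_projS_smul, norm_projS_smul, mul_left_comm]
    exact mul_le_mul_of_nonneg_left (not_le.1 hzX).le (abs_nonneg _)
  refine (hasZeroDensity_cone_of_isCompact_of_disjoint_tanUpper hK (hKT.mono_right hTan)).mono
    (Eventually.of_forall fun r => (measure_mono ?_).trans (Measure.le_restrict_apply _ _))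
  rintro z ⟨hz, hzB⟩
  exact ⟨⟨(hdiff hz).1, hzB⟩, (hdiff hz).2⟩

lemma tanUpper_subset_of_hasZeroDensity_diff_xCone
    (h : ∀ ε > 0, HasZeroDensity m fun r => μ ((A \ xCone a T ε) ∩ closedBall a r)) :
    TanUpper m (μ.restrict A) a ⊆ T := by
  intro v hv
  by_contra hvT
  obtain ⟨ε, hε, δ, hδ, hEX⟩ := exists_eCone_subset_compl_xCone (a := a) hvT
  refine (hv δ hδ).ne' (upperDensity_eq_zero_iff.2 ((h ε hε).mono
    (Eventually.of_forall fun r => ?_)))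
  dsimp only
  rw [Measure.restrict_apply measurableSet_closedBall, Measure.restrict_apply
    (measurableSet_closedBall.inter (isOpen_eCone a v δ).measurableSet)]
  exact measure_mono fun z ⟨⟨hzB, hzE⟩, hzA⟩ => ⟨⟨hzA, hEX hzE⟩, hzB⟩

lemma hasZeroDensity_normal_gt_of_diff_xCone (hε : 0 < ε)
    (h : HasZeroDensity m fun r => μ ((A \ xCone a T ε) ∩ closedBall a r)) :
    HasZeroDensity m fun r => μ (A ∩ closedBall a r ∩ {z | ε * r < ‖projS Tᗮ (z - a)‖}) :=
  h.mono (Eventually.of_forall fun r =>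
    measure_mono (inter_closedBall_inter_normal_gt_subset hε.le A r))

lemma hasZeroDensity_diff_xCone_of_normal_gt (hm : 1 ≤ m)
    (h : ∀ ε > 0,
      HasZeroDensity m fun r => μ (A ∩ closedBall a r ∩ {z | ε * r < ‖projS Tᗮ (z - a)‖}))
    (hε : 0 < ε) : HasZeroDensity m fun r => μ ((A \ xCone a T ε) ∩ closedBall a r) :=
  ((h (ε / (2 * (1 + ε))) (by positivity)).tsum_dyadic hm).mono
    (Eventually.of_forall fun r =>
      (measure_mono (diff_xCone_inter_closedBall_subset_iUnion hε A r)).trans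
        (measure_iUnion_le _))

end Equivalences

theorem stmt7_general {m n : ℕ} (hm : 1 ≤ m)
    (A : Set (EuclideanSpace ℝ (Fin n))) (a : EuclideanSpace ℝ (Fin n))
    (T : Submodule ℝ (EuclideanSpace ℝ (Fin n))) :
    ((TanUpper m (μH[(m : ℝ)].restrict A) a ⊆ (T : Set (EuclideanSpace ℝ (Fin n)))) ↔
      (∀ ε : ℝ, 0 < ε → Filter.Tendsto (fun r : ℝ =>
        μH[(m : ℝ)] ((A \ {z | ‖projS Tᗮ (z - a)‖ ≤ ε * ‖projS T (z - a)‖}) ∩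
            Metric.closedBall a r) / (ballVol m * ENNReal.ofReal (r ^ m)))
        (𝓝[>] (0 : ℝ)) (𝓝 0))) ∧
    ((∀ ε : ℝ, 0 < ε → Filter.Tendsto (fun r : ℝ =>
        μH[(m : ℝ)] ((A \ {z | ‖projS Tᗮ (z - a)‖ ≤ ε * ‖projS T (z - a)‖}) ∩
            Metric.closedBall a r) / (ballVol m * ENNReal.ofReal (r ^ m)))
        (𝓝[>] (0 : ℝ)) (𝓝 0)) ↔
      (∀ ε : ℝ, 0 < ε → Filter.Tendsto (fun r : ℝ =>
        μH[(m : ℝ)] (A ∩ Metric.closedBall a r ∩ {z | ε * r < ‖projS Tᗮ (z - a)‖}) /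
          (ballVol m * ENNReal.ofReal (r ^ m))) (𝓝[>] (0 : ℝ)) (𝓝 0))) :=
  ⟨⟨fun h1 _ hε => hasZeroDensity_diff_xCone_of_tanUpper_subset h1 hε,
      tanUpper_subset_of_hasZeroDensity_diff_xCone⟩,
    fun h2 ε hε => hasZeroDensity_normal_gt_of_diff_xCone hε (h2 ε hε),
    fun h3 _ hε => hasZeroDensity_diff_xCone_of_normal_gt hm h3 hε⟩

theorem stmt7 {m n : ℕ} (hm : 1 ≤ m) (hmn : m ≤ n)
    (A : Set (EuclideanSpace ℝ (Fin n))) (a : EuclideanSpace ℝ (Fin n))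
    (T : Submodule ℝ (EuclideanSpace ℝ (Fin n))) (hT : Module.finrank ℝ T = m) :
    ((TanUpper m (μH[(m : ℝ)].restrict A) a ⊆ (T : Set (EuclideanSpace ℝ (Fin n)))) ↔
      (∀ ε : ℝ, 0 < ε → Filter.Tendsto (fun r : ℝ =>
        μH[(m : ℝ)] ((A \ {z | ‖projS Tᗮ (z - a)‖ ≤ ε * ‖projS T (z - a)‖}) ∩
            Metric.closedBall a r) / (ballVol m * ENNReal.ofReal (r ^ m)))
        (𝓝[>] (0 : ℝ)) (𝓝 0))) ∧
    ((∀ ε : ℝ, 0 < ε → Filter.Tendsto (fun r : ℝ =>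
        μH[(m : ℝ)] ((A \ {z | ‖projS Tᗮ (z - a)‖ ≤ ε * ‖projS T (z - a)‖}) ∩
            Metric.closedBall a r) / (ballVol m * ENNReal.ofReal (r ^ m)))
        (𝓝[>] (0 : ℝ)) (𝓝 0)) ↔
      (∀ ε : ℝ, 0 < ε → Filter.Tendsto (fun r : ℝ =>
        μH[(m : ℝ)] (A ∩ Metric.closedBall a r ∩ {z | ε * r < ‖projS Tᗮ (z - a)‖}) /
          (ballVol m * ENNReal.ofReal (r ^ m))) (𝓝[>] (0 : ℝ)) (𝓝 0))) :=
  stmt7_general hm A a T
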